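/- Let f ∈ F_q[x] be a monic polynomial of degree t ≥ 2 with nonzero constant term, and let γ = |{β ∈ F_q : f(β) ≠ 0}|. Then the Generalized RUNS matrix M(f) — whose rows are indexed by the q^t sequences in G(f) grouped by orbits under the shift, with block 0 having columns the first t shifts L^{j−1}s and block k (for the k-th element β_k with f(β_k) ≠ 0) having columns (L − β_k)^{−j} s for j = 1,…,t — is an ordered orthogonal array OOA(q^t; t, γ+1, t, q): every left-justified set of t columns is 1-covered. -/

import Mathlib

/-!
Write `A = F[X]/(f)`, `x` for the class of `X`, and `λ : A → F` for the coefficient of `x^(t-1)`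
in the reduced representative; `(y, r) ↦ λ (y * r)` is a nondegenerate pairing. The map
`r ↦ (n ↦ λ (xⁿ * r))` identifies `A` with `G(f)`, the shift becomes multiplication by `x`, and
`(L - β)⁻¹` becomes multiplication by `(x - β)⁻¹`. A left-justified choice of `t` columns therefore
reads off `λ (e * r)` for `e` running through `xʲ` (`j < ℓ₀`) and `(x - β)^-(j+1)` (`j < ℓ_β`).
After multiplication by the unit `∏ (x - β)^ℓ_β` these become polynomials of degree `< t`, which
are linearly independent by uniqueness of partial fractions. So they form a basis of `A`, and by
nondegeneracy each row pattern is taken by exactly one `r`.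
-/

open Polynomial Finset

namespace Polynomial

variable {F : Type*} [Field F] {S : Type*}

theorem linearIndependent_X_sub_C_pow (β : F) : LinearIndependent F fun k : ℕ => (X - C β) ^ k :=
  Sequence.linearIndependent ⟨fun k => (X - C β) ^ k, fun k => by simp⟩

theorem natDegree_prod_X_sub_C_pow (β : S → F) (ℓ : S → ℕ) (s : Finset S) :
    (∏ σ ∈ s, (X - C (β σ)) ^ ℓ σ).natDegree = ∑ σ ∈ s, ℓ σ := by
  rw [natDegree_prod _ _ fun σ _ => pow_ne_zero _ (X_sub_C_ne_zero _)]
  simp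

variable [Fintype S] [DecidableEq S]

theorem eq_zero_of_mul_prod_add_sum_mul_prod_erase_eq_zero {β : S → F}
    (hβ : Function.Injective β) {ℓ : S → ℕ} {q : F[X]} {R : S → F[X]}
    (hR : ∀ σ, (R σ).degree < ℓ σ)
    (h : q * ∏ σ, (X - C (β σ)) ^ ℓ σ
      + ∑ σ, R σ * ∏ σ' ∈ univ.erase σ, (X - C (β σ')) ^ ℓ σ' = 0) :
    q = 0 ∧ ∀ σ, R σ = 0 := by
  have hR0 : ∀ σ, R σ = 0 := by
    intro σ
    rw [← add_sum_erase _ _ (mem_univ σ)] at h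
    have hdvd : (X - C (β σ)) ^ ℓ σ ∣ R σ * ∏ σ' ∈ univ.erase σ, (X - C (β σ')) ^ ℓ σ' := by
      rw [show R σ * _ = -(q * ∏ σ, (X - C (β σ)) ^ ℓ σ)
          - ∑ σ'' ∈ univ.erase σ, R σ'' * ∏ σ' ∈ univ.erase σ'', (X - C (β σ')) ^ ℓ σ' by
        linear_combination h]
      refine dvd_sub (dvd_neg.mpr (dvd_mul_of_dvd_right (dvd_prod_of_mem _ (mem_univ σ)) q))
        (dvd_sum fun σ'' hσ'' => dvd_mul_of_dvd_right (dvd_prod_of_mem _ ?_) _)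
      exact mem_erase.mpr ⟨(ne_of_mem_erase hσ'').symm, mem_univ σ⟩
    have hcop : IsCoprime ((X - C (β σ)) ^ ℓ σ) (∏ σ' ∈ univ.erase σ, (X - C (β σ')) ^ ℓ σ') :=
      IsCoprime.prod_right fun σ' hσ' => IsCoprime.pow (isCoprime_X_sub_C_of_isUnit_sub
        (sub_ne_zero.mpr (hβ.ne (ne_of_mem_erase hσ').symm)).isUnit)
    refine eq_zero_of_dvd_of_degree_lt (hcop.dvd_of_dvd_mul_right hdvd) ?_
    simpa using hR σ
  refine ⟨?_, hR0⟩
  simp only [hR0, zero_mul, sum_const_zero, add_zero] at h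
  exact (mul_eq_zero.mp h).resolve_right
    (monic_prod_of_monic _ _ fun σ _ => (monic_X_sub_C (β σ)).pow _).ne_zero

noncomputable def blockPoly (β : S → F) (ℓ : Option S → ℕ) :
    (Σ bl : Option S, Fin (ℓ bl)) → F[X]
  | ⟨none, j⟩ => X ^ (j : ℕ) * ∏ σ, (X - C (β σ)) ^ ℓ (some σ)
  | ⟨some σ, j⟩ => (X - C (β σ)) ^ (ℓ (some σ) - (j + 1)) *
      ∏ σ' ∈ univ.erase σ, (X - C (β σ')) ^ ℓ (some σ')

theorem blockPoly_mem_degreeLT (β : S → F) (ℓ : Option S → ℕ) (i : Σ bl : Option S, Fin (ℓ bl)) :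
    blockPoly β ℓ i ∈ degreeLT F (∑ bl, ℓ bl) := by
  have hne : ∀ s : Finset S, ∏ σ ∈ s, (X - C (β σ)) ^ ℓ (some σ) ≠ 0 :=
    fun s => prod_ne_zero_iff.mpr fun σ _ => pow_ne_zero _ (X_sub_C_ne_zero _)
  rw [mem_degreeLT, Fintype.sum_option]
  refine (degree_le_natDegree).trans_lt (Nat.cast_lt.mpr ?_)
  obtain ⟨_ | σ, j⟩ := i
  · rw [blockPoly, natDegree_mul (pow_ne_zero _ X_ne_zero) (hne _), natDegree_X_pow,
      natDegree_prod_X_sub_C_pow]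
    have := j.2
    omega
  · rw [blockPoly, natDegree_mul (pow_ne_zero _ (X_sub_C_ne_zero _)) (hne _), natDegree_pow,
      natDegree_X_sub_C, mul_one, natDegree_prod_X_sub_C_pow, ← add_sum_erase _ _ (mem_univ σ)]
    have := j.2
    omega

theorem linearIndependent_blockPoly {β : S → F} (hβ : Function.Injective β) (ℓ : Option S → ℕ) :
    LinearIndependent F (blockPoly β ℓ) := by
  refine Fintype.linearIndependent_iff.mpr fun g hg => ?_
  set R : S → F[X] := fun σ =>
    ∑ j : Fin (ℓ (some σ)), g ⟨some σ, j⟩ • (X - C (β σ)) ^ (ℓ (some σ) - (j + 1))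
  have hR : ∀ σ, (R σ).degree < ℓ (some σ) := fun σ => mem_degreeLT.mp <|
    Submodule.sum_mem _ fun j _ => Submodule.smul_mem _ _ <| mem_degreeLT.mpr <| by
      rw [degree_pow, degree_X_sub_C, nsmul_one]
      exact Nat.cast_lt.mpr (by have := j.2; omega)
  have hsplit := eq_zero_of_mul_prod_add_sum_mul_prod_erase_eq_zero hβ hR
    (q := ∑ j : Fin (ℓ none), g ⟨none, j⟩ • X ^ (j : ℕ)) (by
      rw [← hg, Fintype.sum_sigma, Fintype.sum_option, sum_mul]
      simp only [R, sum_mul, blockPoly, smul_mul_assoc])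
  rintro ⟨_ | σ, j⟩
  · exact Fintype.linearIndependent_iff.mp
      ((linearIndependent_X_sub_C_pow 0).comp _ Fin.val_injective)
      (fun j => g ⟨none, j⟩) (by simpa using hsplit.1) j
  · have hinj : Function.Injective fun j : Fin (ℓ (some σ)) => ℓ (some σ) - ((j : ℕ) + 1) :=
      fun j j' h => Fin.ext (by have := j.2; have := j'.2; simp only at h; omega)
    exact Fintype.linearIndependent_iff.mp ((linearIndependent_X_sub_C_pow (β σ)).comp _ hinj)
      (fun j => g ⟨some σ, j⟩) (hsplit.2 σ) j

end Polynomial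

namespace AdjoinRoot

variable {F : Type*} [Field F] {f : F[X]}

noncomputable def topCoeff (hf : f.Monic) : AdjoinRoot f →ₗ[F] F :=
  (lcoeff F (f.natDegree - 1)).comp (modByMonicHom hf)

theorem topCoeff_mk (hf : f.Monic) (p : F[X]) :
    topCoeff hf (mk f p) = (p %ₘ f).coeff (f.natDegree - 1) := by
  simp [topCoeff, modByMonicHom_mk]

theorem eq_zero_of_forall_topCoeff_mul_eq_zero (hf : f.Monic) {r : AdjoinRoot f}
    (h : ∀ y, topCoeff hf (y * r) = 0) : r = 0 := by
  obtain ⟨p, rfl⟩ := mk_surjective r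
  rw [← mk_leftInverse hf (mk f p), modByMonicHom_mk] at h ⊢
  set ρ := p %ₘ f
  by_contra hρ
  have hρ0 : ρ ≠ 0 := by rintro h0; simp [h0] at hρ
  have hlt : ρ.natDegree < f.natDegree := natDegree_lt_natDegree hρ0 (degree_modByMonic_lt p hf)
  -- pairing with `X ^ k` moves the leading coefficient of `ρ` to position `natDegree f - 1`
  set k := f.natDegree - 1 - ρ.natDegree
  have hdeg : (X ^ k * ρ).degree < f.degree := by
    rw [mul_comm, degree_mul_X_pow, degree_eq_natDegree hρ0, degree_eq_natDegree hf.ne_zero]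
    exact_mod_cast (by omega : ρ.natDegree + k < f.natDegree)
  have := h (mk f (X ^ k))
  rw [← map_mul, topCoeff_mk, (modByMonic_eq_self_iff hf).mpr hdeg,
    show f.natDegree - 1 = ρ.natDegree + k by omega, coeff_X_pow_mul] at this
  exact hρ0 (leadingCoeff_eq_zero.mp this)

theorem bijective_topCoeff_mul {ι : Type*} [Fintype ι] (hf : f.Monic) {e : ι → AdjoinRoot f}
    (he : LinearIndependent F e) (hcard : Fintype.card ι = f.natDegree) :
    Function.Bijective fun r : AdjoinRoot f => fun i => topCoeff hf (e i * r) := by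
  have := hf.finite_adjoinRoot
  let pairing : AdjoinRoot f →ₗ[F] ι → F :=
    LinearMap.pi fun i => (topCoeff hf).comp (LinearMap.mulLeft F (e i))
  have hrank : Module.finrank F (AdjoinRoot f) = f.natDegree :=
    finrank_quotient_span_eq_natDegree
  have hdim : Module.finrank F (AdjoinRoot f) = Module.finrank F (ι → F) := by
    rw [hrank, Module.finrank_fintype_fun_eq_card, hcard]
  have hinj : Function.Injective pairing := by
    refine (injective_iff_map_eq_zero pairing).mpr fun r hr => ?_
    have hspan := he.span_eq_top_of_card_eq_finrank' (hcard.trans hrank.symm)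
    have hzero : (topCoeff hf).comp (LinearMap.mulRight F r) = 0 :=
      LinearMap.ext_on_range hspan fun i => by simpa [pairing] using congrFun hr i
    exact eq_zero_of_forall_topCoeff_mul_eq_zero hf fun y => LinearMap.congr_fun hzero y
  exact ⟨hinj, (LinearMap.injective_iff_surjective_of_finrank_eq_finrank hdim).mp hinj⟩

theorem isUnit_mk_X_sub_C {β : F} (hβ : ¬ f.IsRoot β) : IsUnit (mk f (X - C β)) := by
  have hcop : IsCoprime (X - C β) f :=
    (irreducible_X_sub_C β).coprime_iff_not_dvd.mpr fun hdvd => hβ (dvd_iff_isRoot.mp hdvd)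
  simpa [isCoprime_zero_right] using hcop.map (mk f)

theorem isUnit_root (h0 : f.coeff 0 ≠ 0) : IsUnit (root f) := by
  simpa using isUnit_mk_X_sub_C (f := f) (β := 0)
    (by simpa [IsRoot, coeff_zero_eq_eval_zero] using h0)

theorem linearIndependent_mk_comp (hf : f.Monic) {ι : Type*} {p : ι → F[X]}
    (hp : LinearIndependent F p) (hdeg : ∀ i, p i ∈ degreeLT F f.natDegree) :
    LinearIndependent F (mk f ∘ p) := by
  refine hp.map (f := (mkₐ f).toLinearMap) (Submodule.disjoint_def.mpr fun q hq hker => ?_)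
  have hlt : q.degree < f.degree := by
    rw [degree_eq_natDegree hf.ne_zero]
    exact mem_degreeLT.mp (Submodule.span_le.mpr (Set.range_subset_iff.mpr hdeg) hq)
  exact eq_zero_of_dvd_of_degree_lt (mk_eq_zero.mp hker) hlt

variable {S : Type*} [Fintype S] [DecidableEq S]

/-- Pairing with `blockVector f β ℓ ⟨bl, j⟩` gives column `j` of block `bl` of the RUNS matrix. -/
noncomputable def blockVector (f : F[X]) (β : S → F) (ℓ : Option S → ℕ) :
    (Σ bl : Option S, Fin (ℓ bl)) → AdjoinRoot f
  | ⟨none, j⟩ => root f ^ (j : ℕ)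
  | ⟨some σ, j⟩ => Ring.inverse (mk f (X - C (β σ))) ^ ((j : ℕ) + 1)

theorem blockVector_mul_mk_prod {β : S → F} (hroot : ∀ σ, ¬ f.IsRoot (β σ))
    (ℓ : Option S → ℕ) (i : Σ bl : Option S, Fin (ℓ bl)) :
    blockVector f β ℓ i * mk f (∏ σ, (X - C (β σ)) ^ ℓ (some σ)) = mk f (blockPoly β ℓ i) := by
  obtain ⟨_ | σ, j⟩ := i
  · simp [blockVector, blockPoly]
  · rw [blockVector, blockPoly, ← mul_prod_erase _ _ (mem_univ σ), map_mul, map_mul, map_pow,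
      map_pow, ← mul_assoc, ← pow_mul_pow_sub _ j.2, ← mul_assoc, ← mul_pow,
      Ring.inverse_mul_cancel _ (isUnit_mk_X_sub_C (hroot σ)), one_pow, one_mul]

theorem linearIndependent_blockVector (hf : f.Monic) {β : S → F} (hβ : Function.Injective β)
    (hroot : ∀ σ, ¬ f.IsRoot (β σ)) {ℓ : Option S → ℕ} (hℓ : ∑ bl, ℓ bl ≤ f.natDegree) :
    LinearIndependent F (blockVector f β ℓ) := by
  let mulProd := LinearMap.mulRight F (mk f (∏ σ, (X - C (β σ)) ^ ℓ (some σ)))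
  have hcomp : mulProd ∘ blockVector f β ℓ = mk f ∘ blockPoly β ℓ :=
    funext (blockVector_mul_mk_prod hroot ℓ)
  refine LinearIndependent.of_comp mulProd ?_
  rw [hcomp]
  exact linearIndependent_mk_comp hf (linearIndependent_blockPoly hβ ℓ)
    fun i => degreeLT_mono hℓ (blockPoly_mem_degreeLT β ℓ i)

end AdjoinRoot

open AdjoinRoot

section Recurrence

variable {F : Type*} [Field F] {t : ℕ} {b : ℕ → F}

variable (t b) in
noncomputable def recurrencePoly : F[X] := ∑ i ∈ range (t + 1), C (b i) * X ^ i

theorem coeff_recurrencePoly (k : ℕ) :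
    (recurrencePoly t b).coeff k = if k < t + 1 then b k else 0 := by
  simp [recurrencePoly, coeff_C_mul, coeff_X_pow]

theorem aeval_recurrencePoly {A : Type*} [CommRing A] [Algebra F A] (a : A) :
    aeval a (recurrencePoly t b) = ∑ i ∈ range (t + 1), b i • a ^ i := by
  simp [recurrencePoly, Algebra.smul_def]

theorem isRoot_recurrencePoly_iff {β : F} :
    (recurrencePoly t b).IsRoot β ↔ ∑ i ∈ range (t + 1), b i * β ^ i = 0 := by
  simp [IsRoot, ← coe_aeval_eq_eval, aeval_recurrencePoly]

theorem natDegree_recurrencePoly_le : (recurrencePoly t b).natDegree ≤ t :=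
  natDegree_sum_le_of_forall_le _ _ fun _ hi =>
    (natDegree_C_mul_X_pow_le _ _).trans (Nat.lt_succ_iff.mp (mem_range.mp hi))

theorem recurrencePoly_monic (hbt : b t = 1) : (recurrencePoly t b).Monic :=
  monic_of_natDegree_le_of_coeff_eq_one t natDegree_recurrencePoly_le
    (by simp [coeff_recurrencePoly, hbt])

theorem natDegree_recurrencePoly (hbt : b t ≠ 0) : (recurrencePoly t b).natDegree = t :=
  natDegree_eq_of_le_of_coeff_ne_zero natDegree_recurrencePoly_le
    (by simpa [coeff_recurrencePoly] using hbt)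

variable (t b) in
def recurrenceSubmodule : Submodule F (ℤ → F) where
  carrier := {s | ∀ n : ℤ, ∑ i ∈ range (t + 1), b i * s (n + i) = 0}
  add_mem' hs hs' n := by simp [mul_add, sum_add_distrib, hs n, hs' n]
  zero_mem' n := by simp
  smul_mem' c s hs n := by simp [mul_left_comm _ c, ← mul_sum, hs n]

namespace recurrenceSubmodule

theorem eq_zero_of_shift_eq_mul {β : F} (hβ : ∑ i ∈ range (t + 1), b i * β ^ i ≠ 0)
    {s : ℤ → F} (hs : s ∈ recurrenceSubmodule t b) (hshift : ∀ n, s (n + 1) = β * s n) :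
    s = 0 := by
  have hpow : ∀ (i : ℕ) (n : ℤ), s (n + i) = β ^ i * s n := by
    intro i
    induction i with
    | zero => simp
    | succ i ih => intro n; rw [Nat.cast_succ, ← add_assoc, hshift, ih, pow_succ]; ring
  funext n
  have hn := hs n
  simp only [hpow, ← mul_assoc, ← sum_mul] at hn
  exact (mul_eq_zero.mp hn).resolve_left hβ

theorem eq_zero_of_window_eq_zero (hbt : b t ≠ 0) (hb0 : b 0 ≠ 0) {s : ℤ → F}
    (hs : s ∈ recurrenceSubmodule t b) (hwindow : ∀ i < t, s i = 0) : s = 0 := by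
  let Vanishes : ℤ → Prop := fun n => ∀ i < t, s (n + i) = 0
  have hprev : ∀ n, Vanishes (n + 1) → s n = 0 := by
    intro n hn
    have hrec := hs n
    rw [sum_range_succ', sum_eq_zero fun i hi => ?_, zero_add, Nat.cast_zero, add_zero] at hrec
    · exact (mul_eq_zero.mp hrec).resolve_left hb0
    · rw [Nat.cast_succ, add_comm (i : ℤ), ← add_assoc, hn i (mem_range.mp hi), mul_zero]
  have hnext : ∀ n, Vanishes n → s (n + t) = 0 := by
    intro n hn
    have hrec := hs n
    rw [sum_range_succ, sum_eq_zero fun i hi => by rw [hn i (mem_range.mp hi), mul_zero],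
      zero_add] at hrec
    exact (mul_eq_zero.mp hrec).resolve_left hbt
  have hstep : ∀ n, Vanishes n ↔ Vanishes (n + 1) := by
    intro n
    constructor
    · intro hn i hi
      rcases Nat.lt_or_ge (i + 1) t with h | h
      · simpa [add_assoc, add_comm (1 : ℤ)] using hn (i + 1) h
      · rw [add_assoc, add_comm 1, show (i : ℤ) + 1 = t by omega]
        exact hnext n hn
    · intro hn i hi
      cases i with
      | zero => simpa using hprev n hn
      | succ i => simpa [add_assoc, add_comm (1 : ℤ)] using hn i (by omega)
  have hall : ∀ n, Vanishes n := fun n =>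
    Int.induction_on n (by simpa [Vanishes] using hwindow)
      (fun k hk => (hstep k).mp hk) (fun k hk => (hstep _).mpr (by simpa using hk))
  funext n
  exact hprev n (hall (n + 1))

end recurrenceSubmodule

section OrbitSeq

variable {A : Type*} [CommRing A] [Algebra F A]

def orbitSeq (φ : A →ₗ[F] F) (u : Aˣ) (r : A) (n : ℤ) : F := φ (↑(u ^ n) * r)

variable {φ : A →ₗ[F] F} {u : Aˣ}

theorem orbitSeq_natCast (r : A) (k : ℕ) : orbitSeq φ u r k = φ (↑u ^ k * r) := by
  simp [orbitSeq]

theorem orbitSeq_mem_recurrenceSubmodule (hu : aeval (u : A) (recurrencePoly t b) = 0) (r : A) :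
    orbitSeq φ u r ∈ recurrenceSubmodule t b := by
  intro n
  have hpow : ∀ i : ℕ, (↑(u ^ (n + i)) : A) = ↑(u ^ n) * ↑u ^ i := fun i => by
    rw [zpow_add, Units.val_mul, zpow_natCast, Units.val_pow_eq_pow_val]
  rw [aeval_recurrencePoly] at hu
  calc ∑ i ∈ range (t + 1), b i * orbitSeq φ u r (n + i)
      = φ (↑(u ^ n) * (∑ i ∈ range (t + 1), b i • (u : A) ^ i) * r) := by
        simp only [orbitSeq, hpow, mul_sum, sum_mul, map_sum, mul_smul_comm, smul_mul_assoc,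
          map_smul, smul_eq_mul]
    _ = 0 := by rw [hu, mul_zero, zero_mul, map_zero]

theorem orbitSeq_sub_smul_orbitSeq (β : F) (w r : A) (n : ℤ) :
    orbitSeq φ u (w * r) (n + 1) - β * orbitSeq φ u (w * r) n =
      orbitSeq φ u ((↑u - algebraMap F A β) * w * r) n := by
  have hexpand : ↑(u ^ n) * ((↑u - algebraMap F A β) * w * r)
      = ↑(u ^ (n + 1)) * (w * r) - β • (↑(u ^ n) * (w * r)) := by
    rw [zpow_add_one, Units.val_mul, Algebra.smul_def]
    ring
  rw [orbitSeq, orbitSeq, orbitSeq, hexpand, map_sub, map_smul, smul_eq_mul]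

theorem iterate_orbitSeq (hu : aeval (u : A) (recurrencePoly t b) = 0) {β : F}
    (hβ : ∑ i ∈ range (t + 1), b i * β ^ i ≠ 0) {w : A} (hw : (↑u - algebraMap F A β) * w = 1)
    {T : (ℤ → F) → ℤ → F}
    (hT : ∀ s ∈ recurrenceSubmodule t b, T s ∈ recurrenceSubmodule t b ∧
      ∀ n, T s (n + 1) - β * T s n = s n) (k : ℕ) (r : A) :
    T^[k] (orbitSeq φ u r) = orbitSeq φ u (w ^ k * r) := by
  induction k with
  | zero => simp
  | succ k ih =>
    rw [Function.iterate_succ_apply', ih, pow_succ', mul_assoc]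
    obtain ⟨hmem, hshift⟩ := hT _ (orbitSeq_mem_recurrenceSubmodule hu (w ^ k * r))
    rw [← sub_eq_zero]
    refine recurrenceSubmodule.eq_zero_of_shift_eq_mul hβ
      (sub_mem hmem (orbitSeq_mem_recurrenceSubmodule hu _)) fun n => ?_
    have hinv := orbitSeq_sub_smul_orbitSeq (φ := φ) (u := u) β w (w ^ k * r) n
    rw [hw, one_mul] at hinv
    simp only [Pi.sub_apply]
    linear_combination hshift n - hinv

end OrbitSeq

theorem bijective_orbitSeq_topCoeff (hbt : b t = 1) (hb0 : b 0 ≠ 0)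
    {u : (AdjoinRoot (recurrencePoly t b))ˣ} (hu : (u : AdjoinRoot (recurrencePoly t b)) = root _) :
    Function.Bijective fun r : AdjoinRoot (recurrencePoly t b) =>
      (⟨orbitSeq (topCoeff (recurrencePoly_monic hbt)) u r,
        orbitSeq_mem_recurrenceSubmodule (by rw [hu, aeval_eq, mk_self]) r⟩ :
          recurrenceSubmodule t b) := by
  have hf := recurrencePoly_monic hbt
  have hdeg : (recurrencePoly t b).natDegree = t := natDegree_recurrencePoly (by simp [hbt])
  have hpow : LinearIndependent F fun k : Fin t => root (recurrencePoly t b) ^ (k : ℕ) := by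
    have := (powerBasis' hf).basis.linearIndependent.comp (Fin.cast (by rw [powerBasis'_dim, hdeg]))
      (Fin.cast_injective _)
    simpa [Function.comp_def] using this
  have hpair := bijective_topCoeff_mul hf hpow (by rw [Fintype.card_fin, hdeg])
  have hwindow : ∀ r (k : ℕ), orbitSeq (topCoeff hf) u r k = topCoeff hf (root _ ^ k * r) := by
    intro r k
    rw [orbitSeq_natCast, hu]
  refine ⟨fun r r' h => hpair.injective (funext fun k => ?_), fun ⟨s, hs⟩ => ?_⟩
  · rw [← hwindow, ← hwindow]
    exact congrFun (congrArg Subtype.val h) k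
  · obtain ⟨r, hr⟩ := hpair.surjective fun k => s k
    refine ⟨r, Subtype.ext (sub_eq_zero.mp ?_).symm⟩
    refine recurrenceSubmodule.eq_zero_of_window_eq_zero (by simp [hbt]) hb0
      (sub_mem hs (orbitSeq_mem_recurrenceSubmodule (by rw [hu, aeval_eq, mk_self]) r))
      fun i hi => ?_
    change s i - orbitSeq (topCoeff hf) u r i = 0
    rw [hwindow, sub_eq_zero]
    exact (congrFun hr ⟨i, hi⟩).symm

end Recurrence

open Classical in
theorem stmt13 {F : Type*} [Field F] [Fintype F]
    (t : ℕ) (b : ℕ → F) (hmonic : b t = 1) (hb0 : b 0 ≠ 0)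
    (G : Set (ℤ → F))
    (hG : G = {s : ℤ → F | ∀ n : ℤ, ∑ i ∈ Finset.range (t + 1), b i * s (n + i) = 0})
    (T : {β : F // ∑ i ∈ Finset.range (t + 1), b i * β ^ i ≠ 0} → (ℤ → F) → (ℤ → F))
    (hT : ∀ β, ∀ s ∈ G, T β s ∈ G ∧
        ∀ n : ℤ, (T β s) (n + 1) - (β : F) * (T β s) n = s n) :
    ∀ ℓ : Option {β : F // ∑ i ∈ Finset.range (t + 1), b i * β ^ i ≠ 0} → ℕ,
      (∀ bl, ℓ bl ≤ t) → (∑ bl, ℓ bl = t) →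
      ∀ v : Option {β : F // ∑ i ∈ Finset.range (t + 1), b i * β ^ i ≠ 0} → ℕ → F,
      ∃! s : {u : ℤ → F // u ∈ G},
        ∀ bl, ∀ j : ℕ, j < ℓ bl →
          (match bl with
            | none => s.val j
            | some β => (T β)^[j + 1] s.val 0) = v bl j := by
  intro ℓ _ hℓ v
  subst hG
  set f := recurrencePoly t b
  have hf : f.Monic := recurrencePoly_monic hmonic
  obtain ⟨u, hu⟩ := isUnit_root (f := f) (by simpa [f, coeff_recurrencePoly] using hb0)
  have hroot : ∀ β : {β : F // ∑ i ∈ range (t + 1), b i * β ^ i ≠ 0}, ¬ f.IsRoot β :=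
    fun β => isRoot_recurrencePoly_iff.not.mpr β.2
  have hiter : ∀ β k r, (T β)^[k] (orbitSeq (topCoeff hf) u r) =
      orbitSeq (topCoeff hf) u (Ring.inverse (mk f (X - C (β : F))) ^ k * r) := fun β =>
    iterate_orbitSeq (by rw [hu, aeval_eq, mk_self]) β.2
      (by rw [hu, AdjoinRoot.algebraMap_eq, ← mk_X, ← mk_C, ← map_sub,
        Ring.mul_inverse_cancel _ (isUnit_mk_X_sub_C (hroot β))]) (hT β)
  have hdeg : f.natDegree = t := natDegree_recurrencePoly (by simp [hmonic])
  have hcolumns := bijective_topCoeff_mul hf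
    (linearIndependent_blockVector hf Subtype.val_injective hroot (by rw [hℓ, hdeg]))
    (by simp [hℓ, hdeg])
  refine (bijective_orbitSeq_topCoeff hmonic hb0 hu).existsUnique_iff.mpr ?_
  convert hcolumns.existsUnique (fun i => v i.1 i.2) using 2 with r
  simp only [funext_iff, Sigma.forall, Fin.forall_iff]
  refine forall_congr' fun bl => forall_congr' fun j => forall_congr' fun _ => ?_
  rcases bl with _ | β
  · simp [blockVector, orbitSeq_natCast, hu]
  · simp [blockVector, hiter, orbitSeq]
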